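/- If E is similar to F and F is similar to G, with the witnessing modified histories obtained only by appending responses (no invocations removed), then E is similar to G; i.e., similarity restricted to response-appending witnesses is transitive. -/

import Mathlib

namespace RV

inductive Event where
  | inv (p : ℕ) (op : ℕ)
  | res (p : ℕ) (op : ℕ)
deriving DecidableEq

abbrev History := List Event

def Event.proc : Event → ℕ
  | .inv p _ => p
  | .res p _ => p

def Event.op : Event → ℕ
  | .inv _ o => o
  | .res _ o => o

def Event.isInv : Event → Bool
  | .inv _ _ => true
  | .res _ _ => false

/-- The subsequence of events of process `p`. -/
def proj (E : History) (p : ℕ) : History := E.filter (fun e => e.proc == p)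

/-- Two histories are equivalent if every process has the same subsequence of events. -/
def Equivalent (E F : History) : Prop := ∀ p, proj E p = proj F p

/-- Operation `a` precedes operation `b` in `E`: the response of `a` occurs
before the invocation of `b`. -/
def prec (E : History) (a b : ℕ) : Prop :=
  ∃ i j p q, i < j ∧ E[(i : ℕ)]? = some (Event.res p a) ∧ E[(j : ℕ)]? = some (Event.inv q b)

/-- A single process' subsequence alternates invocation, matching response, ... ,
possibly ending with a pending invocation. -/
inductive Alt : History → Prop where
  | nil : Alt []
  | pend (p o : ℕ) : Alt [Event.inv p o]
  | step (p o : ℕ) (l : History) : Alt l → Alt (Event.inv p o :: Event.res p o :: l)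

/-- Well-formed history: per-process alternation, and every operation identifier is
invoked at most once and responded at most once. -/
def WellFormed (E : History) : Prop :=
  (∀ p, Alt (proj E p)) ∧
  (∀ o, E.countP (fun e => e.isInv && e.op == o) ≤ 1) ∧
  (∀ o, E.countP (fun e => !e.isInv && e.op == o) ≤ 1)

def CompleteIn (E : History) (o : ℕ) : Prop :=
  (∃ p, Event.inv p o ∈ E) ∧ ∃ q, Event.res q o ∈ E

def PendingIn (E : History) (o : ℕ) : Prop :=
  (∃ p, Event.inv p o ∈ E) ∧ ∀ q, Event.res q o ∉ E

def hasRes (E : History) (o : ℕ) : Bool := E.any (fun e => !e.isInv && e.op == o)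

/-- `comp E` removes the invocations of pending operations. -/
def comp (E : History) : History := E.filter (fun e => !e.isInv || hasRes E e.op)

/-- `E'` extends `E` by appending responses to some pending operations. -/
def IsExtension (E E' : History) : Prop :=
  ∃ rs : History, E' = E ++ rs ∧
    (∀ e ∈ rs, e.isInv = false ∧ PendingIn E e.op ∧ Event.inv e.proc e.op ∈ E) ∧
    rs.Pairwise (fun a b => a.op ≠ b.op)

/-- Sequential histories: alternating invocation/matching-response pairs. -/
inductive Seq : History → Prop where
  | nil : Seq []
  | step (p o : ℕ) (l : History) : Seq l → Seq (Event.inv p o :: Event.res p o :: l)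

/-- `E` is linearizable w.r.t. the sequential object `O` (a set of sequential
histories): there is an extension `E'` of `E` and `S ∈ O` such that `comp E'`
and `S` are equivalent and `<_{comp E'} ⊆ <_S`. -/
def Linearizable (O : Set History) (E : History) : Prop :=
  ∃ E', IsExtension E E' ∧ ∃ S ∈ O, Equivalent (comp E') S ∧
    ∀ a b, prec (comp E') a b → prec S a b

/-- `E` is similar to `F`: some history `E'`, obtained from `E` by appending
responses to some pending operations and removing the invocations of some other
pending operations, is equivalent to `F` and satisfies `≺_{E'} ⊆ ≺_F`. -/
def Similar (E F : History) : Prop :=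
  ∃ (keep : Event → Bool) (rs : History),
    (∀ e ∈ E, keep e = false → e.isInv = true ∧ PendingIn E e.op) ∧
    (∀ e ∈ rs, e.isInv = false ∧ PendingIn E e.op ∧ Event.inv e.proc e.op ∈ E ∧
      keep (Event.inv e.proc e.op) = true) ∧
    rs.Pairwise (fun a b => a.op ≠ b.op) ∧
    Equivalent (E.filter keep ++ rs) F ∧
    (∀ a b, prec (E.filter keep ++ rs) a b → prec F a b)

/-- The class `GenLin`: sets of well-formed histories closed under prefixes and
under similarity. -/
def GenLin (O : Set History) : Prop :=
  (∀ F ∈ O, ∀ E : History, E <+: F → E ∈ O) ∧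
  (∀ F ∈ O, ∀ E : History, Similar E F → E ∈ O)

/-- Similarity where the witnessing modified history is obtained only by appending
responses to pending operations (no invocations removed). -/
def SimilarApp (E F : History) : Prop :=
  ∃ rs : History,
    (∀ e ∈ rs, e.isInv = false ∧ PendingIn E e.op ∧ Event.inv e.proc e.op ∈ E) ∧
    rs.Pairwise (fun a b => a.op ≠ b.op) ∧
    Equivalent (E ++ rs) F ∧
    (∀ a b, prec (E ++ rs) a b → prec F a b)

/-!
Compose the two witnesses: `E ++ rs₁ ++ rs₂` works for `E` and `G`. A response in `rs₂`
answers an operation pending in `F`; since `E ++ rs₁` is equivalent to `F` and `rs₁` adds no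
invocations, that operation is already invoked and pending in `E`, and, being pending in `F`,
it is not one answered by `rs₁`. Appending responses preserves equivalence, and it creates no
new precedence, because a precedence pair needs an invocation after the response.
-/

lemma Event.eq_res_of_isInv_eq_false {e : Event} (h : e.isInv = false) :
    e = Event.res e.proc e.op := by
  cases e with
  | inv p o => simp [Event.isInv] at h
  | res p o => rfl

namespace Equivalent

lemma symm {H K : History} (h : Equivalent H K) : Equivalent K H :=
  fun p => (h p).symm

lemma trans {H K L : History} (h₁ : Equivalent H K) (h₂ : Equivalent K L) : Equivalent H L :=
  fun p => (h₁ p).trans (h₂ p)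

lemma append_right {H K : History} (h : Equivalent H K) (rs : History) :
    Equivalent (H ++ rs) (K ++ rs) := by
  intro p
  simp only [proj, List.filter_append]
  exact congrArg (· ++ _) (h p)

lemma mem {H K : History} (h : Equivalent H K) {e : Event} (he : e ∈ H) : e ∈ K := by
  have : e ∈ proj H e.proc := List.mem_filter.2 ⟨he, by simp⟩
  rw [h e.proc] at this
  exact (List.mem_filter.1 this).1

end Equivalent

section AppendResponses

variable {E rs : History}

lemma inv_mem_of_inv_mem_append (hrs : ∀ e ∈ rs, e.isInv = false) {p o : ℕ}
    (h : Event.inv p o ∈ E ++ rs) : Event.inv p o ∈ E :=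
  (List.mem_append.1 h).resolve_right fun hr => by simpa [Event.isInv] using hrs _ hr

lemma prec_append {a b : ℕ} (h : prec E a b) : prec (E ++ rs) a b := by
  obtain ⟨i, j, p, q, hij, hi, hj⟩ := h
  refine ⟨i, j, p, q, hij, ?_, ?_⟩
  · rwa [List.getElem?_append_left (List.getElem?_eq_some_iff.1 hi).1]
  · rwa [List.getElem?_append_left (List.getElem?_eq_some_iff.1 hj).1]

lemma prec_of_prec_append (hrs : ∀ e ∈ rs, e.isInv = false) {a b : ℕ}
    (h : prec (E ++ rs) a b) : prec E a b := by
  obtain ⟨i, j, p, q, hij, hi, hj⟩ := h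
  have hjE : j < E.length := by
    by_contra! hle
    rw [List.getElem?_append_right hle] at hj
    simpa [Event.isInv] using hrs _ (List.mem_of_getElem? hj)
  refine ⟨i, j, p, q, hij, ?_, ?_⟩
  · rwa [List.getElem?_append_left (hij.trans hjE)] at hi
  · rwa [List.getElem?_append_left hjE] at hj

lemma pendingIn_of_equivalent_append {F : History} (hrs : ∀ e ∈ rs, e.isInv = false)
    (hEF : Equivalent (E ++ rs) F) {o : ℕ} (ho : PendingIn F o) : PendingIn E o := by
  obtain ⟨⟨p, hinv⟩, hnres⟩ := ho
  exact ⟨⟨p, inv_mem_of_inv_mem_append hrs (hEF.symm.mem hinv)⟩,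
    fun q hres => hnres q (hEF.mem (List.mem_append_left rs hres))⟩

end AppendResponses

lemma op_ne_of_pendingIn {F : History} {e : Event} (he : e ∈ F) (hres : e.isInv = false)
    {o : ℕ} (ho : PendingIn F o) : e.op ≠ o := by
  rintro rfl
  exact ho.2 e.proc (Event.eq_res_of_isInv_eq_false hres ▸ he)

theorem similarApp_trans_general (E F G : History)
    (hEF : SimilarApp E F) (hFG : SimilarApp F G) : SimilarApp E G := by
  obtain ⟨rs₁, hrs₁, hpw₁, heq₁, hprec₁⟩ := hEF
  obtain ⟨rs₂, hrs₂, hpw₂, heq₂, hprec₂⟩ := hFG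
  have hres₁ : ∀ e ∈ rs₁, e.isInv = false := fun e he => (hrs₁ e he).1
  have hres₂ : ∀ e ∈ rs₂, e.isInv = false := fun e he => (hrs₂ e he).1
  refine ⟨rs₁ ++ rs₂, ?_, ?_, ?_, ?_⟩
  · intro e he
    rcases List.mem_append.1 he with he | he
    · exact hrs₁ e he
    · obtain ⟨hres, hpend, hinv⟩ := hrs₂ e he
      exact ⟨hres, pendingIn_of_equivalent_append hres₁ heq₁ hpend,
        inv_mem_of_inv_mem_append hres₁ (heq₁.symm.mem hinv)⟩
  · refine List.pairwise_append.2 ⟨hpw₁, hpw₂, fun x hx y hy => ?_⟩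
    exact op_ne_of_pendingIn (heq₁.mem (List.mem_append_right E hx)) (hres₁ x hx)
      (hrs₂ y hy).2.1
  · rw [← List.append_assoc]
    exact (heq₁.append_right rs₂).trans heq₂
  · intro a b hab
    rw [← List.append_assoc] at hab
    exact hprec₂ a b (prec_append (hprec₁ a b (prec_of_prec_append hres₂ hab)))

/-- Similarity restricted to response-appending witnesses is transitive. -/
theorem similarApp_trans (E F G : History)
    (hwfE : WellFormed E) (hwfF : WellFormed F) (hwfG : WellFormed G)
    (hEF : SimilarApp E F) (hFG : SimilarApp F G) : SimilarApp E G :=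
  similarApp_trans_general E F G hEF hFG

end RV
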